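/- arXiv:2305.03426 — 6 statements merged into one kernel-verified Lean document; each statement's English description precedes it below -/
import Mathlib

section
/- (Convergence of coding sequences, proof of Theorem 3) Let r ∈ [0,1) and M ≥ 0. Let (T_k)_{k∈ℕ} be a sequence of isometries of ℝ^d fixing the origin, and let (g_k)_{k∈ℕ} be a sequence of maps ℝ^d → ℝ^d, each Lipschitz with constant r and satisfying ‖g_k(0)‖ ≤ M for all k. Then the sequence x_k = (T₀ ∘ g₀) ∘ (T₁ ∘ g₁) ∘ ⋯ ∘ (T_k ∘ g_k)(0) is convergent in ℝ^d. -/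
/-!
Each `T_k ∘ g_k` is an `r`-contraction moving the origin by at most `M`, so the composite
`x ↦ (T₀ ∘ g₀) ∘ ⋯ ∘ (T_k ∘ g_k) x` is `r^(k+1)`-Lipschitz. Since `x_{k+1}` is this composite
evaluated at `(T_{k+1} ∘ g_{k+1}) 0` and `x_k` is it evaluated at `0`, consecutive terms are
at distance at most `M r^(k+1)`: the sequence is Cauchy with geometric rate, hence converges.
-/

/-- `compSeq k F = F 0 ∘ F 1 ∘ ⋯ ∘ F k`. -/
def compSeq {X : Type*} : ℕ → (ℕ → X → X) → X → X
  | 0, F => F 0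
  | (k + 1), F => F 0 ∘ compSeq k (fun i => F (i + 1))

open Filter Topology NNReal

theorem compSeq_succ' {X : Type*} (k : ℕ) (F : ℕ → X → X) :
    compSeq (k + 1) F = compSeq k F ∘ F (k + 1) := by
  induction k generalizing F with
  | zero => rfl
  | succ k ih =>
    change F 0 ∘ compSeq (k + 1) (fun i => F (i + 1)) = (F 0 ∘ compSeq k fun i => F (i + 1)) ∘ _
    rw [ih]
    rfl

section Metric

variable {X : Type*} [PseudoMetricSpace X] {K : ℝ≥0} {F : ℕ → X → X}

theorem lipschitzWith_compSeq (hF : ∀ i, LipschitzWith K (F i)) (k : ℕ) :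
    LipschitzWith (K ^ (k + 1)) (compSeq k F) := by
  induction k generalizing F with
  | zero => rw [zero_add, pow_one]; exact hF 0
  | succ k ih =>
    rw [pow_succ']
    exact (hF 0).comp (ih fun i => hF (i + 1))

theorem dist_compSeq_compSeq_succ_le (hF : ∀ i, LipschitzWith K (F i)) {x : X} {M : ℝ}
    (hM : ∀ i, dist (F i x) x ≤ M) (k : ℕ) :
    dist (compSeq k F x) (compSeq (k + 1) F x) ≤ M * K * K ^ k := by
  rw [compSeq_succ', Function.comp_apply, dist_comm]
  calc dist (compSeq k F (F (k + 1) x)) (compSeq k F x)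
      ≤ K ^ (k + 1) * dist (F (k + 1) x) x := (lipschitzWith_compSeq hF k).dist_le_mul _ _
    _ ≤ K ^ (k + 1) * M := by gcongr; exact hM _
    _ = M * K * K ^ k := by ring

theorem exists_tendsto_compSeq_of_lipschitzWith [CompleteSpace X] (hK : K < 1)
    (hF : ∀ i, LipschitzWith K (F i)) {x : X} {M : ℝ} (hM : ∀ i, dist (F i x) x ≤ M) :
    ∃ L, Tendsto (fun k => compSeq k F x) atTop (𝓝 L) :=
  cauchySeq_tendsto_of_complete <|
    cauchySeq_of_le_geometric (K : ℝ) (M * K) hK (dist_compSeq_compSeq_succ_le hF hM)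

end Metric

theorem coding_sequence_converges_general {d : ℕ} (r M : ℝ) (hr0 : 0 ≤ r) (hr1 : r < 1)
    (T g : ℕ → EuclideanSpace ℝ (Fin d) → EuclideanSpace ℝ (Fin d))
    (hT : ∀ i, ∀ x y, ‖T i x - T i y‖ = ‖x - y‖)
    (hT0 : ∀ i, T i 0 = 0)
    (hg : ∀ i, ∀ x y, ‖g i x - g i y‖ ≤ r * ‖x - y‖)
    (hg0 : ∀ i, ‖g i 0‖ ≤ M) :
    ∃ L : EuclideanSpace ℝ (Fin d),
      Filter.Tendsto (fun k => compSeq k (fun i => T i ∘ g i) 0) Filter.atTop (nhds L) := by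
  have hlip : ∀ i, LipschitzWith r.toNNReal (T i ∘ g i) := fun i =>
    LipschitzWith.of_dist_le_mul fun x y => by
      simpa only [Real.coe_toNNReal r hr0, dist_eq_norm, Function.comp_apply, hT] using hg i x y
  have hmove : ∀ i, dist ((T i ∘ g i) 0) 0 ≤ M := fun i =>
    calc dist (T i (g i 0)) 0 = ‖T i (g i 0) - T i 0‖ := by rw [hT0, dist_zero_right, sub_zero]
      _ = ‖g i 0‖ := by rw [hT, sub_zero]
      _ ≤ M := hg0 i
  exact exists_tendsto_compSeq_of_lipschitzWith (Real.toNNReal_lt_one.mpr hr1) hlip hmove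

/-- Convergence of coding sequences (proof of Theorem 3): if each `T_k` is an isometry of
`ℝ^d` fixing the origin and each `g_k` is `r`-Lipschitz (`r ∈ [0,1)`) with `‖g_k 0‖ ≤ M`,
then the sequence `x_k = (T₀ ∘ g₀) ∘ (T₁ ∘ g₁) ∘ ⋯ ∘ (T_k ∘ g_k) (0)` converges. -/
theorem coding_sequence_converges {d : ℕ} (r M : ℝ) (hr0 : 0 ≤ r) (hr1 : r < 1) (hM : 0 ≤ M)
    (T g : ℕ → EuclideanSpace ℝ (Fin d) → EuclideanSpace ℝ (Fin d))
    (hT : ∀ i, ∀ x y, ‖T i x - T i y‖ = ‖x - y‖)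
    (hT0 : ∀ i, T i 0 = 0)
    (hg : ∀ i, ∀ x y, ‖g i x - g i y‖ ≤ r * ‖x - y‖)
    (hg0 : ∀ i, ‖g i 0‖ ≤ M) :
    ∃ L : EuclideanSpace ℝ (Fin d),
      Filter.Tendsto (fun k => compSeq k (fun i => T i ∘ g i) 0) Filter.atTop (nhds L) :=
  coding_sequence_converges_general r M hr0 hr1 T g hT hT0 hg hg0
end

section
/- (Theorem 3, existence of the minimal invariant set) Let R₁,…,Rₘ : ℝ^d → ℝ^d (m ≥ 1) be surjective isometries fixing the origin and let f₁,…,fₙ : ℝ^d → ℝ^d (n ≥ 1) be Banach contractions. Then there exists a nonempty compact set X₀ ⊆ ℝ^d such that X₀ = (⋃ᵢ Rᵢ(X₀)) ∪ (⋃ⱼ fⱼ(X₀)), and X₀ ⊆ X for every nonempty closed bounded set X ⊆ ℝ^d satisfying X = (⋃ᵢ Rᵢ(X)) ∪ (⋃ⱼ fⱼ(X)). -/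
/-! Let `p` be the fixed point of one of the contractions and let `X₀` be the smallest closed
set containing `p` that every map of the system sends into itself. A closed invariant set `X`
is mapped into itself by that contraction, so it contains the limit `p` of the contraction's
iterates, and therefore `X₀ ⊆ X`. A closed ball around the origin that is large enough is
mapped into itself by all the maps, so `X₀` lies in it and is compact. Then the image of `X₀`
under the system is closed, contains `p` and is mapped into itself, hence contains `X₀`. -/

open Set Metric NNReal

section Hutchinson

variable {ι α : Type*} (g : ι → α → α)

def hutchinson (S : Set α) : Set α := ⋃ i, g i '' S

variable {g}

theorem hutchinson_mono : Monotone (hutchinson g) :=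
  fun _ _ hST => iUnion_mono fun _ => image_mono hST

theorem hutchinson_subset_iff {S C : Set α} :
    hutchinson g S ⊆ C ↔ ∀ i, MapsTo (g i) S C := by
  simp only [hutchinson, iUnion_subset_iff, mapsTo_iff_image_subset]

variable (g) [TopologicalSpace α]

def closedInvariantHull (p : α) : Set α :=
  ⋂₀ {C | IsClosed C ∧ p ∈ C ∧ hutchinson g C ⊆ C}

variable {g}

theorem isClosed_closedInvariantHull (p : α) : IsClosed (closedInvariantHull g p) :=
  isClosed_sInter fun _ hC => hC.1

theorem mem_closedInvariantHull (p : α) : p ∈ closedInvariantHull g p :=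
  mem_sInter.2 fun _ hC => hC.2.1

theorem closedInvariantHull_subset {p : α} {C : Set α} (hC : IsClosed C) (hp : p ∈ C)
    (hgC : hutchinson g C ⊆ C) : closedInvariantHull g p ⊆ C :=
  sInter_subset_of_mem ⟨hC, hp, hgC⟩

theorem hutchinson_closedInvariantHull_subset (p : α) :
    hutchinson g (closedInvariantHull g p) ⊆ closedInvariantHull g p :=
  subset_sInter fun _ hC =>
    (hutchinson_mono (sInter_subset_of_mem hC)).trans hC.2.2

theorem hutchinson_closedInvariantHull [Finite ι] [T2Space α] (hg : ∀ i, Continuous (g i))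
    {p : α} {j : ι} (hj : g j p = p) (hK : IsCompact (closedInvariantHull g p)) :
    hutchinson g (closedInvariantHull g p) = closedInvariantHull g p := by
  refine (hutchinson_closedInvariantHull_subset p).antisymm
    (closedInvariantHull_subset ?_ ?_ (hutchinson_mono (hutchinson_closedInvariantHull_subset p)))
  · exact (isCompact_iUnion fun i => hK.image (hg i)).isClosed
  · exact mem_iUnion.2 ⟨j, p, mem_closedInvariantHull p, hj⟩

end Hutchinson

section Metric

variable {α : Type*} [MetricSpace α]

theorem ContractingWith.fixedPoint_mem_of_mapsTo [Nonempty α] [CompleteSpace α] {K : ℝ≥0}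
    {f : α → α} (hf : ContractingWith K f) {s : Set α} (hs : IsClosed s) (hne : s.Nonempty)
    (hfs : MapsTo f s s) : fixedPoint f hf ∈ s := by
  obtain ⟨x, hx⟩ := hne
  exact hs.mem_of_tendsto (hf.tendsto_iterate_fixedPoint x)
    (Filter.Eventually.of_forall fun k => hfs.iterate k hx)

theorem LipschitzWith.mapsTo_closedBall_self {K : ℝ≥0} {f : α → α} (hf : LipschitzWith K f)
    {c : α} {ρ : ℝ} (hρ : dist (f c) c + K * ρ ≤ ρ) :
    MapsTo f (closedBall c ρ) (closedBall c ρ) := fun x hx =>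
  calc dist (f x) c ≤ dist (f x) (f c) + dist (f c) c := dist_triangle _ _ _
    _ ≤ K * ρ + dist (f c) c := by gcongr; exact hf.dist_le_mul_of_le hx
    _ ≤ ρ := by linarith

/-- Any radius `ρ ≥ dist (f c) c / (1 - K)` works for a `K`-contraction `f`. -/
theorem exists_mapsTo_closedBall_of_contractingWith {ι : Type*} [Finite ι] [Nonempty ι]
    {K : ι → ℝ≥0} {f : ι → α → α} (hf : ∀ j, ContractingWith (K j) (f j)) (c : α) :
    ∃ ρ, 0 ≤ ρ ∧ ∀ j, MapsTo (f j) (closedBall c ρ) (closedBall c ρ) := by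
  obtain ⟨ρ, hρ⟩ := Finite.exists_le fun j => dist (f j c) c / (1 - K j)
  have hρ₀ : 0 ≤ ρ := (div_nonneg dist_nonneg
    (hf (Classical.arbitrary ι)).one_sub_K_pos.le).trans (hρ _)
  refine ⟨ρ, hρ₀, fun j => (hf j).toLipschitzWith.mapsTo_closedBall_self ?_⟩
  have := (div_le_iff₀ (hf j).one_sub_K_pos).1 (hρ j)
  linarith

theorem isCompact_closedInvariantHull [ProperSpace α] {ι : Type*} {g : ι → α → α}
    {p c : α} {ρ : ℝ} (hp : p ∈ closedBall c ρ)
    (hball : hutchinson g (closedBall c ρ) ⊆ closedBall c ρ) :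
    IsCompact (closedInvariantHull g p) :=
  (isCompact_closedBall c ρ).of_isClosed_subset (isClosed_closedInvariantHull p)
    (closedInvariantHull_subset isClosed_closedBall hp hball)

end Metric

theorem exists_minimal_invariant_set_of_RIFS_general {d m n : ℕ} (hn : 0 < n)
    (R : Fin m → EuclideanSpace ℝ (Fin d) → EuclideanSpace ℝ (Fin d))
    (hRiso : ∀ i, Isometry (R i))
    (hR0 : ∀ i, R i 0 = 0)
    (f : Fin n → EuclideanSpace ℝ (Fin d) → EuclideanSpace ℝ (Fin d))
    (r : Fin n → ℝ) (hr0 : ∀ j, 0 ≤ r j) (hr1 : ∀ j, r j < 1)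
    (hf : ∀ j x y, ‖f j x - f j y‖ ≤ r j * ‖x - y‖) :
    ∃ X₀ : Set (EuclideanSpace ℝ (Fin d)), X₀.Nonempty ∧ IsCompact X₀ ∧
      X₀ = (⋃ i, R i '' X₀) ∪ (⋃ j, f j '' X₀) ∧
      ∀ X : Set (EuclideanSpace ℝ (Fin d)), X.Nonempty → IsClosed X →
        Bornology.IsBounded X → X = (⋃ i, R i '' X) ∪ (⋃ j, f j '' X) → X₀ ⊆ X := by
  set g := Sum.elim R f
  have hg : ∀ S, hutchinson g S = (⋃ i, R i '' S) ∪ (⋃ j, f j '' S) := fun _ => iUnion_sum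
  have hcontr (j : Fin n) : ContractingWith ⟨r j, hr0 j⟩ (f j) :=
    ⟨hr1 j, .of_dist_le_mul fun x y => by
      rw [dist_eq_norm, dist_eq_norm]; exact hf j x y⟩
  let j₀ : Fin n := ⟨0, hn⟩
  have : Nonempty (Fin n) := ⟨j₀⟩
  set p := ContractingWith.fixedPoint (f j₀) (hcontr j₀)
  have hp_mem {X} (hX : IsClosed X) (hne : X.Nonempty) (hgX : hutchinson g X ⊆ X) : p ∈ X :=
    (hcontr j₀).fixedPoint_mem_of_mapsTo hX hne (hutchinson_subset_iff.1 hgX (.inr j₀))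
  obtain ⟨ρ, hρ, hball⟩ := exists_mapsTo_closedBall_of_contractingWith hcontr 0
  have hgball : hutchinson g (closedBall 0 ρ) ⊆ closedBall 0 ρ := hutchinson_subset_iff.2 <| by
    rintro (i | j)
    · simpa only [g, Sum.elim_inl, hR0] using (hRiso i).mapsTo_closedBall 0 ρ
    · exact hball j
  have hK : IsCompact (closedInvariantHull g p) := isCompact_closedInvariantHull
    (hp_mem isClosed_closedBall (nonempty_closedBall.2 hρ) hgball) hgball
  have hgc : ∀ k, Continuous (g k) := by
    rintro (i | j)
    exacts [(hRiso i).continuous, (hcontr j).toLipschitzWith.continuous]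
  refine ⟨closedInvariantHull g p, ⟨p, mem_closedInvariantHull p⟩, hK, ?_,
    fun X hne hX _ hXinv => ?_⟩
  · rw [← hg, hutchinson_closedInvariantHull hgc (j := .inr j₀)
      (hcontr j₀).fixedPoint_isFixedPt hK]
  · have hgX : hutchinson g X ⊆ X := (hg X).trans_subset hXinv.symm.subset
    exact closedInvariantHull_subset hX (hp_mem hX hne hgX) hgX

/-- Theorem 3: every R-IFS (surjective isometries fixing the origin together with Banach
contractions) possesses a minimal invariant set: a nonempty compact invariant set contained
in every nonempty closed bounded invariant set. -/
theorem exists_minimal_invariant_set_of_RIFS {d m n : ℕ} (hm : 0 < m) (hn : 0 < n)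
    (R : Fin m → EuclideanSpace ℝ (Fin d) → EuclideanSpace ℝ (Fin d))
    (hRiso : ∀ i, Isometry (R i))
    (hRsurj : ∀ i, Function.Surjective (R i))
    (hR0 : ∀ i, R i 0 = 0)
    (f : Fin n → EuclideanSpace ℝ (Fin d) → EuclideanSpace ℝ (Fin d))
    (r : Fin n → ℝ) (hr0 : ∀ j, 0 ≤ r j) (hr1 : ∀ j, r j < 1)
    (hf : ∀ j x y, ‖f j x - f j y‖ ≤ r j * ‖x - y‖) :
    ∃ X₀ : Set (EuclideanSpace ℝ (Fin d)), X₀.Nonempty ∧ IsCompact X₀ ∧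
      X₀ = (⋃ i, R i '' X₀) ∪ (⋃ j, f j '' X₀) ∧
      ∀ X : Set (EuclideanSpace ℝ (Fin d)), X.Nonempty → IsClosed X →
        Bornology.IsBounded X → X = (⋃ i, R i '' X) ∪ (⋃ j, f j '' X) → X₀ ⊆ X :=
  exists_minimal_invariant_set_of_RIFS_general hn R hRiso hR0 f r hr0 hr1 hf
end

section
/- (Corollary of Theorem 4 for a single periodic isometry) Let R : ℝ^d → ℝ^d be a surjective isometry fixing the origin with R^p = id for some p ≥ 1, and let f₁,…,fₙ : ℝ^d → ℝ^d (n ≥ 1) be Banach contractions. Then the minimal invariant set X₀ of the R-IFS {R, f₁,…,fₙ} is the unique nonempty compact set A with A = ⋃_{k=0}^{p−1} ⋃_{j=1}^{n} R^k(fⱼ(A)). -/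
/-!
Because `R^[p] = id`, the finite orbit `Y = ⋃_{k<p} R^k (⋃_j f_j X₀)` equals the full forward
orbit, hence is `R`-invariant; it lies inside `X₀` and satisfies `Y = R Y ∪ ⋃_j f_j Y`, so
minimality gives `X₀ = Y`. The maps `R^k ∘ f_j` (`k < p`) are contractions with the ratios of the
`f_j`, so their Hutchinson operator contracts the Hausdorff distance and has at most one nonempty
compact fixed set.
-/

open Set Metric
open scoped NNReal ENNReal

section Hausdorff

variable {α β : Type*} [PseudoEMetricSpace α] [PseudoEMetricSpace β]

theorem LipschitzWith.infEDist_image_le {K : ℝ≥0} {f : α → β} (hf : LipschitzWith K f)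
    (x : α) {t : Set α} (ht : t.Nonempty) : infEDist (f x) (f '' t) ≤ K * infEDist x t := by
  have : Nonempty t := ht.to_subtype
  rw [infEDist, infEDist, iInf_image, iInf_subtype', iInf_subtype',
    ENNReal.mul_iInf fun h => absurd h ENNReal.coe_ne_top]
  exact iInf_mono fun y => hf x y

theorem LipschitzWith.hausdorffEDist_image_le {K : ℝ≥0} {f : α → β} (hf : LipschitzWith K f)
    {s t : Set α} (hs : s.Nonempty) (ht : t.Nonempty) :
    hausdorffEDist (f '' s) (f '' t) ≤ K * hausdorffEDist s t := by
  refine hausdorffEDist_le_of_infEDist ?_ ?_ <;> rintro _ ⟨x, hx, rfl⟩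
  · exact (hf.infEDist_image_le x ht).trans
      (mul_le_mul_right (infEDist_le_hausdorffEDist_of_mem hx) _)
  · rw [hausdorffEDist_comm]
    exact (hf.infEDist_image_le x hs).trans
      (mul_le_mul_right (infEDist_le_hausdorffEDist_of_mem hx) _)

theorem hausdorffEDist_iUnion_image_le {ι : Type*} {K : ℝ≥0} {g : ι → α → β}
    (hg : ∀ i, LipschitzWith K (g i)) {s t : Set α} (hs : s.Nonempty) (ht : t.Nonempty) :
    hausdorffEDist (⋃ i, g i '' s) (⋃ i, g i '' t) ≤ K * hausdorffEDist s t :=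
  hausdorffEDist_iUnion_le.trans (iSup_le fun i => (hg i).hausdorffEDist_image_le hs ht)

end Hausdorff

theorem eq_of_iUnion_image_eq_of_lipschitzWith {E ι : Type*} [MetricSpace E] [Finite ι]
    {g : ι → E → E} {c : ι → ℝ≥0} (hc : ∀ i, c i < 1) (hg : ∀ i, LipschitzWith (c i) (g i))
    {A B : Set E} (hAne : A.Nonempty) (hAc : IsClosed A) (hAb : Bornology.IsBounded A)
    (hBne : B.Nonempty) (hBc : IsClosed B) (hBb : Bornology.IsBounded B)
    (hA : A = ⋃ i, g i '' A) (hB : B = ⋃ i, g i '' B) : A = B := by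
  obtain ⟨K, hK, hcK⟩ : ∃ K : ℝ≥0, K < 1 ∧ ∀ i, c i ≤ K := by
    cases nonempty_fintype ι
    exact ⟨Finset.univ.sup c, Finset.sup_lt_iff zero_lt_one |>.2 fun i _ => hc i,
      fun i => Finset.le_sup (Finset.mem_univ i)⟩
  have hD : hausdorffEDist A B ≤ K * hausdorffEDist A B := by
    calc hausdorffEDist A B = hausdorffEDist (⋃ i, g i '' A) (⋃ i, g i '' B) := by
          rw [← hA, ← hB]
      _ ≤ K * hausdorffEDist A B :=
          hausdorffEDist_iUnion_image_le (fun i => (hg i).weaken (hcK i)) hAne hBne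
  have hD0 : hausdorffEDist A B = 0 := by
    by_contra hD0
    have hDtop := hausdorffEDist_ne_top_of_nonempty_of_bounded hAne hBne hAb hBb
    have hlt := ENNReal.mul_lt_mul_left hD0 hDtop (ENNReal.coe_lt_one_iff.2 hK)
    rw [one_mul] at hlt
    exact (hD.trans_lt hlt).false
  exact (hAc.hausdorffEDist_zero_iff hBc).1 hD0

section Periodic

variable {α : Type*} {R : α → α} {p : ℕ}

theorem iUnion_iterate_image_subset {S X : Set α} (hRX : R '' X ⊆ X) (hSX : S ⊆ X) :
    ⋃ k, R^[k] '' S ⊆ X :=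
  iUnion_subset fun k =>
    (image_mono hSX).trans ((mapsTo_iff_image_subset.2 hRX).iterate k).image_subset

theorem biUnion_range_iterate_image (hR : R^[p] = id) (hp : 0 < p) (S : Set α) :
    ⋃ k ∈ Finset.range p, R^[k] '' S = ⋃ k, R^[k] '' S := by
  refine (iUnion₂_subset fun k _ => subset_iUnion (fun k => R^[k] '' S) k).antisymm
    (iUnion_subset fun k => ?_)
  have : R^[k % p] = R^[k] :=
    funext fun x => Function.IsPeriodicPt.iterate_mod_apply (congrFun hR x) k
  rw [← this]
  exact subset_iUnion₂ (s := fun k _ => R^[k] '' S) (k % p)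
    (Finset.mem_range.2 (Nat.mod_lt _ hp))

theorem image_iUnion_iterate_image (hR : R^[p] = id) (hp : 0 < p) (S : Set α) :
    R '' ⋃ k, R^[k] '' S = ⋃ k, R^[k] '' S := by
  simp_rw [image_iUnion, ← image_comp, ← Function.iterate_succ']
  refine (iUnion_subset fun k => subset_iUnion (fun k => R^[k] '' S) (k + 1)).antisymm
    (iUnion_subset fun k => ?_)
  obtain ⟨q, rfl⟩ : ∃ q, p = q + 1 := ⟨p - 1, by omega⟩
  have : R^[k + q + 1] = R^[k] := by rw [add_assoc, Function.iterate_add, hR, Function.comp_id]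
  rw [← this]
  exact subset_iUnion (fun k => R^[k + 1] '' S) (k + q)

variable {ι : Type*} {f : ι → α → α} {X : Set α}

theorem iUnion_iterate_image_iUnion_image_subset (hX : X = R '' X ∪ ⋃ j, f j '' X) :
    ⋃ k, R^[k] '' ⋃ j, f j '' X ⊆ X :=
  iUnion_iterate_image_subset (subset_union_left.trans hX.ge) (subset_union_right.trans hX.ge)

theorem iUnion_iterate_image_iUnion_image_eq_union (hR : R^[p] = id) (hp : 0 < p)
    (hX : X = R '' X ∪ ⋃ j, f j '' X) :
    let Y := ⋃ k, R^[k] '' ⋃ j, f j '' X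
    Y = R '' Y ∪ ⋃ j, f j '' Y := by
  intro Y
  have hFY : ⋃ j, f j '' Y ⊆ Y := calc
    ⋃ j, f j '' Y ⊆ ⋃ j, f j '' X :=
      iUnion_mono fun j => image_mono (iUnion_iterate_image_iUnion_image_subset hX)
    _ ⊆ Y := (image_id _).ge.trans (subset_iUnion (fun k => R^[k] '' ⋃ j, f j '' X) 0)
  rw [image_iUnion_iterate_image hR hp, union_eq_left.2 hFY]

end Periodic

theorem biUnion_range_iUnion_image_image {α β γ ι : Type*} (F : ℕ → β → γ) (f : ι → α → β)
    (p : ℕ) (S : Set α) :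
    ⋃ k ∈ Finset.range p, ⋃ j, F k '' (f j '' S) = ⋃ i : Fin p × ι, (F i.1 ∘ f i.2) '' S := by
  ext x
  simp only [mem_iUnion, Finset.mem_range, Prod.exists, Fin.exists_iff, image_comp]

theorem minimal_invariant_set_of_periodic_isometry_general {d n : ℕ} (hn : 0 < n)
    (R : EuclideanSpace ℝ (Fin d) → EuclideanSpace ℝ (Fin d))
    (hRiso : Isometry R)
    (p : ℕ) (hp : 1 ≤ p) (hRp : R^[p] = id)
    (f : Fin n → EuclideanSpace ℝ (Fin d) → EuclideanSpace ℝ (Fin d))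
    (r : Fin n → ℝ) (hr1 : ∀ j, r j < 1)
    (hf : ∀ j x y, ‖f j x - f j y‖ ≤ r j * ‖x - y‖)
    -- X₀ is the minimal invariant set of the R-IFS {R, f₁,…,fₙ}
    (X₀ : Set (EuclideanSpace ℝ (Fin d)))
    (h0ne : X₀.Nonempty) (h0c : IsCompact X₀)
    (h0inv : X₀ = (R '' X₀) ∪ (⋃ j, f j '' X₀))
    (h0min : ∀ X : Set (EuclideanSpace ℝ (Fin d)), X.Nonempty → IsClosed X →
      Bornology.IsBounded X → X = (R '' X) ∪ (⋃ j, f j '' X) → X₀ ⊆ X) :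
    X₀ = (⋃ k ∈ Finset.range p, ⋃ j, R^[k] '' (f j '' X₀)) ∧
    ∀ A : Set (EuclideanSpace ℝ (Fin d)), A.Nonempty → IsCompact A →
      A = (⋃ k ∈ Finset.range p, ⋃ j, R^[k] '' (f j '' A)) → A = X₀ := by
  have hlip (j : Fin n) : LipschitzWith (r j).toNNReal (f j) :=
    LipschitzWith.of_dist_le' fun x y => by simpa only [dist_eq_norm] using hf j x y
  set Y := ⋃ k, R^[k] '' ⋃ j, f j '' X₀
  have hY : ⋃ k ∈ Finset.range p, ⋃ j, R^[k] '' (f j '' X₀) = Y := by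
    simp_rw [Y, ← biUnion_range_iterate_image hRp hp, image_iUnion]
  have hYc : IsCompact Y :=
    hY ▸ (Finset.range p).finite_toSet.isCompact_biUnion fun k _ => isCompact_iUnion fun j =>
      (h0c.image (hlip j).continuous).image (hRiso.continuous.iterate k)
  have hYne : Y.Nonempty := by
    simp only [Y, nonempty_iUnion, image_nonempty]
    exact ⟨0, ⟨0, hn⟩, h0ne⟩
  have hXY : X₀ = Y :=
    (h0min Y hYne hYc.isClosed hYc.isBounded
      (iUnion_iterate_image_iUnion_image_eq_union hRp hp h0inv)).antisymm
      (iUnion_iterate_image_iUnion_image_subset h0inv)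
  refine ⟨hY ▸ hXY, fun A hAne hAc hA => ?_⟩
  have hglip (i : Fin p × Fin n) : LipschitzWith (r i.2).toNNReal (R^[i.1] ∘ f i.2) := by
    simpa using (hRiso.lipschitz.iterate i.1).comp (hlip i.2)
  rw [biUnion_range_iUnion_image_image] at hA
  refine eq_of_iUnion_image_eq_of_lipschitzWith (fun i => Real.toNNReal_lt_one.2 (hr1 i.2))
    hglip hAne hAc.isClosed hAc.isBounded h0ne h0c.isClosed h0c.isBounded hA ?_
  rw [← biUnion_range_iUnion_image_image, hY]
  exact hXY

/-- Corollary of Theorem 4 for a single periodic isometry: if `R` is a surjective isometry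
fixing `0` with `R^p = id` (`p ≥ 1`), then the minimal invariant set `X₀` of the R-IFS
`{R, f₁,…,fₙ}` is the unique nonempty compact set `A` with
`A = ⋃_{k=0}^{p-1} ⋃_j R^k (fⱼ (A))`. -/
theorem minimal_invariant_set_of_periodic_isometry {d n : ℕ} (hn : 0 < n)
    (R : EuclideanSpace ℝ (Fin d) → EuclideanSpace ℝ (Fin d))
    (hRiso : Isometry R) (hRsurj : Function.Surjective R) (hR0 : R 0 = 0)
    (p : ℕ) (hp : 1 ≤ p) (hRp : R^[p] = id)
    (f : Fin n → EuclideanSpace ℝ (Fin d) → EuclideanSpace ℝ (Fin d))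
    (r : Fin n → ℝ) (hr0 : ∀ j, 0 ≤ r j) (hr1 : ∀ j, r j < 1)
    (hf : ∀ j x y, ‖f j x - f j y‖ ≤ r j * ‖x - y‖)
    -- X₀ is the minimal invariant set of the R-IFS {R, f₁,…,fₙ}
    (X₀ : Set (EuclideanSpace ℝ (Fin d)))
    (h0ne : X₀.Nonempty) (h0c : IsCompact X₀)
    (h0inv : X₀ = (R '' X₀) ∪ (⋃ j, f j '' X₀))
    (h0min : ∀ X : Set (EuclideanSpace ℝ (Fin d)), X.Nonempty → IsClosed X →
      Bornology.IsBounded X → X = (R '' X) ∪ (⋃ j, f j '' X) → X₀ ⊆ X) :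
    X₀ = (⋃ k ∈ Finset.range p, ⋃ j, R^[k] '' (f j '' X₀)) ∧
    ∀ A : Set (EuclideanSpace ℝ (Fin d)), A.Nonempty → IsCompact A →
      A = (⋃ k ∈ Finset.range p, ⋃ j, R^[k] '' (f j '' A)) → A = X₀ :=
  minimal_invariant_set_of_periodic_isometry_general hn R hRiso p hp hRp f r hr1 hf X₀ h0ne h0c
    h0inv h0min
end

section
/- (Example: Sierpinski gasket with two mappings) In the complex plane ℂ, let f₁(z) = e^{2πi/3} z and f₂(z) = z/2 + 1. Then the minimal invariant set of the R-IFS {f₁, f₂} (where f₁ is a surjective isometry fixing 0 with f₁³ = id and f₂ is a 1/2-contraction) is the unique nonempty compact set A ⊆ ℂ satisfying A = f₂(A) ∪ (f₁∘f₂)(A) ∪ (f₁∘f₁∘f₂)(A). -/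
/-!
The maps `f₂, f₁ ∘ f₂, f₁ ∘ f₁ ∘ f₂` are `1/2`-contractions, so their Hutchinson operator is a
contraction of the Hausdorff metric on nonempty compact sets, and Banach's fixed point theorem
gives a unique attractor `A`. Since `f₁³ = id`, composing with `f₁` permutes the three maps, so
`f₁ '' A = A` and hence `A = f₁ '' A ∪ f₂ '' A`; minimality gives `X₀ ⊆ A`. Conversely `X₀` is
closed and stable under `f₁` and `f₂`, hence under the Hutchinson operator, whose iterates started
inside `X₀` converge to `A`; so `A ⊆ X₀`.
-/

open Metric Set TopologicalSpace Function NNReal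

namespace LipschitzWith

variable {α β : Type*} {K : ℝ≥0} {f : α → β}

theorem infEDist_image_le_s11 [PseudoEMetricSpace α] [PseudoEMetricSpace β] (hf : LipschitzWith K f)
    {t : Set α} (ht : t.Nonempty) (x : α) :
    infEDist (f x) (f '' t) ≤ K * infEDist x t := by
  rcases eq_or_ne K 0 with rfl | hK
  -- `0 * ∞ = 0` in `ℝ≥0∞`, which is why `t` must be nonempty
  · obtain ⟨y, hy⟩ := ht
    simpa using (infEDist_le_edist_of_mem (mem_image_of_mem f hy)).trans (hf.edist_le_mul x y)
  · simp only [infEDist, iInf_image,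
      ENNReal.mul_iInf_of_ne (ENNReal.coe_ne_zero.2 hK) ENNReal.coe_ne_top]
    exact iInf₂_mono fun y _ => hf.edist_le_mul x y

theorem hausdorffEDist_image_le_s11 [PseudoEMetricSpace α] [PseudoEMetricSpace β]
    (hf : LipschitzWith K f) {s t : Set α} (hs : s.Nonempty) (ht : t.Nonempty) :
    hausdorffEDist (f '' s) (f '' t) ≤ K * hausdorffEDist s t := by
  refine hausdorffEDist_le_of_infEDist ?_ ?_ <;> rintro _ ⟨x, hx, rfl⟩
  · exact (hf.infEDist_image_le_s11 ht x).trans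
      (mul_le_mul_right (infEDist_le_hausdorffEDist_of_mem hx) _)
  · rw [hausdorffEDist_comm]
    exact (hf.infEDist_image_le_s11 hs x).trans
      (mul_le_mul_right (infEDist_le_hausdorffEDist_of_mem hx) _)

theorem nonemptyCompacts_map [EMetricSpace α] [EMetricSpace β] (hf : LipschitzWith K f) :
    LipschitzWith K (NonemptyCompacts.map f hf.continuous) :=
  fun s t => hf.hausdorffEDist_image_le_s11 s.nonempty t.nonempty

theorem nonemptyCompacts_sup [PseudoEMetricSpace α] [EMetricSpace β]
    {F G : α → NonemptyCompacts β} (hF : LipschitzWith K F) (hG : LipschitzWith K G) :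
    LipschitzWith K fun x => F x ⊔ G x := by
  have := NonemptyCompacts.lipschitz_sup.comp (hF.prodMk hG)
  rwa [one_mul, max_self] at this

end LipschitzWith

theorem ContractingWith.fixedPoint_mem {α : Type*} [MetricSpace α] [Nonempty α] [CompleteSpace α]
    {K : ℝ≥0} {f : α → α} (hf : ContractingWith K f) {s : Set α} (hs : IsClosed s)
    (hsf : MapsTo f s s) {x : α} (hx : x ∈ s) : fixedPoint f hf ∈ s :=
  hs.mem_of_tendsto (hf.tendsto_iterate_fixedPoint x) (.of_forall fun n => hsf.iterate n hx)

section Gasket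

variable {α : Type*} {f₁ f₂ : α → α}

def gasketImage (f₁ f₂ : α → α) (A : Set α) : Set α :=
  f₂ '' A ∪ (f₁ ∘ f₂) '' A ∪ (f₁ ∘ f₁ ∘ f₂) '' A

theorem image_gasketImage (h₁ : ∀ z, f₁ (f₁ (f₁ z)) = z) (A : Set α) :
    f₁ '' gasketImage f₁ f₂ A = gasketImage f₁ f₂ A := by
  have h₁₁₁₂ : f₁ ∘ f₁ ∘ f₁ ∘ f₂ = f₂ := funext fun z => h₁ (f₂ z)
  simp only [gasketImage, image_union, ← image_comp, h₁₁₁₂]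
  rw [union_comm, ← union_assoc]

theorem gasketImage_subset {X A : Set α} (hX₁ : f₁ '' X ⊆ X) (hX₂ : f₂ '' X ⊆ X) (hA : A ⊆ X) :
    gasketImage f₁ f₂ A ⊆ X := by
  have hA₂ : f₂ '' A ⊆ X := (image_mono hA).trans hX₂
  have hA₁₂ : (f₁ ∘ f₂) '' A ⊆ X := by rw [image_comp]; exact (image_mono hA₂).trans hX₁
  have hA₁₁₂ : (f₁ ∘ f₁ ∘ f₂) '' A ⊆ X := by rw [image_comp]; exact (image_mono hA₁₂).trans hX₁
  exact union_subset (union_subset hA₂ hA₁₂) hA₁₁₂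

theorem eq_image_union_image_of_gasketImage_eq (h₁ : ∀ z, f₁ (f₁ (f₁ z)) = z) {A : Set α}
    (hA : gasketImage f₁ f₂ A = A) : A = f₁ '' A ∪ f₂ '' A := by
  have hA₁ : f₁ '' A = A := by simpa only [hA] using image_gasketImage (f₂ := f₂) h₁ A
  have hA₂ : f₂ '' A ⊆ gasketImage f₁ f₂ A := subset_union_left.trans subset_union_left
  rw [hA] at hA₂
  rw [hA₁, union_eq_self_of_subset_right hA₂]

variable [MetricSpace α] {K : ℝ≥0}

def gasketHutchinson (h₁ : Continuous f₁) (h₂ : Continuous f₂) (A : NonemptyCompacts α) :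
    NonemptyCompacts α :=
  A.map f₂ h₂ ⊔ A.map (f₁ ∘ f₂) (h₁.comp h₂) ⊔ A.map (f₁ ∘ f₁ ∘ f₂) (h₁.comp (h₁.comp h₂))

theorem contractingWith_gasketHutchinson (hK : K < 1) (h₁ : LipschitzWith 1 f₁)
    (h₂ : LipschitzWith K f₂) : ContractingWith K (gasketHutchinson h₁.continuous h₂.continuous) := by
  have h₁₂ : LipschitzWith K (f₁ ∘ f₂) := by simpa using h₁.comp h₂
  have h₁₁₂ : LipschitzWith K (f₁ ∘ f₁ ∘ f₂) := by simpa using h₁.comp h₁₂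
  exact ⟨hK, (h₂.nonemptyCompacts_map.nonemptyCompacts_sup
    h₁₂.nonemptyCompacts_map).nonemptyCompacts_sup h₁₁₂.nonemptyCompacts_map⟩

variable [Nonempty α] [CompleteSpace α]

noncomputable def gasketAttractor (hK : K < 1) (h₁ : LipschitzWith 1 f₁)
    (h₂ : LipschitzWith K f₂) : NonemptyCompacts α :=
  ContractingWith.fixedPoint _ (contractingWith_gasketHutchinson hK h₁ h₂)

theorem gasketImage_gasketAttractor (hK : K < 1) (h₁ : LipschitzWith 1 f₁)
    (h₂ : LipschitzWith K f₂) :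
    gasketImage f₁ f₂ (gasketAttractor hK h₁ h₂) = gasketAttractor hK h₁ h₂ :=
  congrArg SetLike.coe (contractingWith_gasketHutchinson hK h₁ h₂).fixedPoint_isFixedPt

theorem eq_gasketAttractor (hK : K < 1) (h₁ : LipschitzWith 1 f₁) (h₂ : LipschitzWith K f₂)
    {B : Set α} (hB : B.Nonempty) (hBc : IsCompact B) (hBfix : gasketImage f₁ f₂ B = B) :
    B = gasketAttractor hK h₁ h₂ :=
  congrArg SetLike.coe <| (contractingWith_gasketHutchinson hK h₁ h₂).fixedPoint_unique
    (x := ⟨⟨B, hBc⟩, hB⟩) (NonemptyCompacts.ext hBfix)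

theorem gasketAttractor_subset (hK : K < 1) (h₁ : LipschitzWith 1 f₁) (h₂ : LipschitzWith K f₂)
    {X : Set α} (hX : IsClosed X) (hXne : X.Nonempty) (hX₁ : f₁ '' X ⊆ X) (hX₂ : f₂ '' X ⊆ X) :
    (gasketAttractor hK h₁ h₂ : Set α) ⊆ X := by
  obtain ⟨x, hx⟩ := hXne
  exact (contractingWith_gasketHutchinson hK h₁ h₂).fixedPoint_mem
    (NonemptyCompacts.isClosed_subsets_of_isClosed hX) (fun A hA => gasketImage_subset hX₁ hX₂ hA)
    (x := {x}) (singleton_subset_iff.2 hx)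

end Gasket

open Complex in
/-- Example (Sierpinski gasket with two mappings): with `f₁ z = e^{2πi/3} z` (a rotation of
order 3) and `f₂ z = z/2 + 1`, the minimal invariant set of the R-IFS `{f₁, f₂}` is the
unique nonempty compact set `A ⊆ ℂ` with
`A = f₂(A) ∪ (f₁ ∘ f₂)(A) ∪ (f₁ ∘ f₁ ∘ f₂)(A)` (the Sierpinski gasket). -/
theorem sierpinski_gasket_two_maps
    (f₁ f₂ : ℂ → ℂ)
    (hf₁ : ∀ z, f₁ z = Complex.exp (2 * Real.pi * Complex.I / 3) * z)
    (hf₂ : ∀ z, f₂ z = z / 2 + 1)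
    -- X₀ is the minimal invariant set of the R-IFS {f₁, f₂}
    (X₀ : Set ℂ)
    (h0ne : X₀.Nonempty) (h0c : IsCompact X₀)
    (h0inv : X₀ = (f₁ '' X₀) ∪ (f₂ '' X₀))
    (h0min : ∀ X : Set ℂ, X.Nonempty → IsClosed X → Bornology.IsBounded X →
      X = (f₁ '' X) ∪ (f₂ '' X) → X₀ ⊆ X) :
    X₀ = (f₂ '' X₀) ∪ ((f₁ ∘ f₂) '' X₀) ∪ ((f₁ ∘ f₁ ∘ f₂) '' X₀) ∧
    ∀ A : Set ℂ, A.Nonempty → IsCompact A →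
      A = (f₂ '' A) ∪ ((f₁ ∘ f₂) '' A) ∪ ((f₁ ∘ f₁ ∘ f₂) '' A) → A = X₀ := by
  have hω : IsPrimitiveRoot (exp (2 * Real.pi * I / 3)) 3 := by
    simpa using isPrimitiveRoot_exp 3 three_ne_zero
  have h₁ : LipschitzWith 1 f₁ := LipschitzWith.of_dist_le_mul fun x y => by
    simp [hf₁, Complex.dist_eq, ← mul_sub, hω.norm'_eq_one three_ne_zero]
  have h₁₁₁ : ∀ z, f₁ (f₁ (f₁ z)) = z := fun z => by
    rw [hf₁, hf₁, hf₁, ← mul_assoc, ← mul_assoc, ← pow_three', hω.pow_eq_one, one_mul]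
  have h₂ : LipschitzWith (1 / 2) f₂ := LipschitzWith.of_dist_le_mul fun x y => by
    rw [hf₂, hf₂, Complex.dist_eq, Complex.dist_eq, add_sub_add_right_eq_sub, ← _root_.sub_div,
      norm_div]
    simp [div_eq_inv_mul]
  have hK : (1 / 2 : ℝ≥0) < 1 := by norm_num
  set A := gasketAttractor hK h₁ h₂
  have hX₀A : X₀ = A := by
    refine (h0min A A.nonempty A.isCompact.isClosed A.isCompact.isBounded
      (eq_image_union_image_of_gasketImage_eq h₁₁₁ (gasketImage_gasketAttractor hK h₁ h₂))).antisymm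
      (gasketAttractor_subset hK h₁ h₂ h0c.isClosed h0ne ?_ ?_)
    · exact subset_union_left.trans h0inv.symm.subset
    · exact subset_union_right.trans h0inv.symm.subset
  refine ⟨?_, fun B hB hBc hBfix => ?_⟩
  · rw [hX₀A]
    exact (gasketImage_gasketAttractor hK h₁ h₂).symm
  · rw [hX₀A]
    exact eq_gasketAttractor hK h₁ h₂ hB hBc hBfix.symm
end

section
/- (Proposition, part 2: the Cantor target is a minimal invariant set of an R-IFS) Let α ∈ ℝ be irrational, let g : ℝ² → ℝ² be the rotation about the origin by angle 2πα, and define f₁(x, y) = (√(x² + y²)/3, 0) and f₂(x, y) = (√(x² + y²)/3 + 2/3, 0). Let C be the middle-thirds Cantor set (the unique nonempty compact C ⊆ ℝ with C = (1/3)·C ∪ ((1/3)·C + 2/3)) and X₀ = {p ∈ ℝ² : ‖p‖ ∈ C}. Then X₀ is a nonempty compact set with X₀ = g(X₀) ∪ f₁(X₀) ∪ f₂(X₀), and X₀ ⊆ X for every nonempty closed bounded X ⊆ ℝ² with X = g(X) ∪ f₁(X) ∪ f₂(X). -/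
/-!
The norm map sends `X₀` onto `C` and conjugates `f₁, f₂` to the two maps `x ↦ x/3`,
`x ↦ x/3 + 2/3` generating `C`, while `g` preserves norms. So for a closed bounded invariant `X`,
the compact set `‖X‖ ⊆ ℝ` is invariant under both contractions and therefore contains their
attractor `C`; hence `X` meets every circle `‖p‖ = c` with `c ∈ C`. Identifying `ℝ²` with `ℂ`,
`g` is multiplication by `exp (2πiα)`, whose forward orbits are dense in their circles because
`α` is irrational; as `X` is closed and `g`-invariant, it contains each such circle entirely.
-/

/-- The rotation of `ℝ²` about the origin by angle `θ`. -/
noncomputable def planeRotation (θ : ℝ) (p : EuclideanSpace ℝ (Fin 2)) :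
    EuclideanSpace ℝ (Fin 2) :=
  WithLp.toLp 2 ![p 0 * Real.cos θ - p 1 * Real.sin θ, p 0 * Real.sin θ + p 1 * Real.cos θ]

open Set Filter Topology Metric Complex Real
open scoped NNReal

theorem subset_of_mapsTo_of_lipschitzWith {α ι : Type*} [PseudoMetricSpace α] {φ : ι → α → α}
    {K : ℝ≥0} (hφ : ∀ i, LipschitzWith K (φ i)) (hK : K < 1) {C N : Set α}
    (hCb : Bornology.IsBounded C) (hC : C ⊆ ⋃ i, φ i '' C) (hN : IsClosed N) (hNne : N.Nonempty)
    (hφN : ∀ i, MapsTo (φ i) N N) : C ⊆ N := by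
  obtain ⟨y₀, hy₀⟩ := hNne
  obtain ⟨R, hR⟩ := hCb.subset_closedBall y₀
  have approx : ∀ n : ℕ, ∀ c ∈ C, ∃ y ∈ N, dist c y ≤ K ^ n * R := by
    intro n
    induction n with
    | zero => exact fun c hc => ⟨y₀, hy₀, by simpa using hR hc⟩
    | succ n ih =>
      intro c hc
      obtain ⟨i, c', hc', rfl⟩ : ∃ i, ∃ c' ∈ C, φ i c' = c := by simpa using hC hc
      obtain ⟨y, hyN, hy⟩ := ih c' hc'
      refine ⟨φ i y, hφN i hyN, ?_⟩
      calc dist (φ i c') (φ i y) ≤ K * dist c' y := (hφ i).dist_le_mul c' y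
        _ ≤ K * (K ^ n * R) := by gcongr
        _ = K ^ (n + 1) * R := by ring
  intro c hc
  choose y hyN hy using fun n => approx n c hc
  have hlim : Tendsto (fun n => (K : ℝ) ^ n * R) atTop (𝓝 0) := by
    simpa using (tendsto_pow_atTop_nhds_zero_of_lt_one K.2 hK).mul_const R
  refine hN.mem_of_tendsto (tendsto_iff_dist_tendsto_zero.2 ?_) (.of_forall (f := atTop) hyN)
  exact squeeze_zero (fun _ => dist_nonneg) (fun n => by rw [dist_comm]; exact hy n) hlim

theorem cantor_subset_of_mapsTo {C N : Set ℝ} (hCb : Bornology.IsBounded C)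
    (hC : C ⊆ (fun x : ℝ => x / 3) '' C ∪ (fun x : ℝ => x / 3 + 2 / 3) '' C)
    (hN : IsClosed N) (hNne : N.Nonempty) (h₁ : MapsTo (fun x : ℝ => x / 3) N N)
    (h₂ : MapsTo (fun x : ℝ => x / 3 + 2 / 3) N N) : C ⊆ N := by
  have hlip₁ : LipschitzWith 3⁻¹ (fun x : ℝ => x / 3) :=
    .of_dist_le_mul fun x y => by
      simp only [Real.dist_eq, ← sub_div, abs_div, Nat.abs_ofNat, NNReal.coe_inv, NNReal.coe_ofNat]
      linarith
  have hlip₂ : LipschitzWith 3⁻¹ (fun x : ℝ => x / 3 + 2 / 3) :=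
    .of_dist_le_mul fun x y => by
      simp only [dist_add_right, Real.dist_eq, ← sub_div, abs_div, Nat.abs_ofNat, NNReal.coe_inv,
        NNReal.coe_ofNat]
      linarith
  refine subset_of_mapsTo_of_lipschitzWith (φ := ![fun x => x / 3, fun x => x / 3 + 2 / 3])
    (Fin.forall_fin_two.2 ⟨hlip₁, hlip₂⟩) (by norm_num) hCb ?_ hN hNne
    (Fin.forall_fin_two.2 ⟨h₁, h₂⟩)
  intro c hc
  simpa [Fin.exists_fin_two] using hC hc

theorem cantor_subset_Icc {C : Set ℝ} (hCb : Bornology.IsBounded C)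
    (hC : C ⊆ (fun x : ℝ => x / 3) '' C ∪ (fun x : ℝ => x / 3 + 2 / 3) '' C) : C ⊆ Icc 0 1 :=
  cantor_subset_of_mapsTo hCb hC isClosed_Icc (nonempty_Icc.2 zero_le_one)
    (fun _ hx => ⟨by linarith [hx.1], by linarith [hx.2]⟩)
    (fun _ hx => ⟨by linarith [hx.1], by linarith [hx.2]⟩)

theorem image_setOf_norm_mem {E : Type*} [Norm E] {g : E → E} (hg : Function.Surjective g)
    (hgn : ∀ p, ‖g p‖ = ‖p‖) (C : Set ℝ) : g '' {p | ‖p‖ ∈ C} = {p | ‖p‖ ∈ C} := by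
  conv_lhs => rw [show {p | ‖p‖ ∈ C} = g ⁻¹' {p | ‖p‖ ∈ C} by ext; simp [hgn]]
  exact image_preimage_eq _ hg

theorem mapsTo_setOf_norm_mem {E : Type*} [Norm E] {f : E → E} {φ : ℝ → ℝ} {C : Set ℝ}
    (hf : ∀ p, ‖f p‖ = φ ‖p‖) (hφ : MapsTo φ C C) :
    MapsTo f {p | ‖p‖ ∈ C} {p | ‖p‖ ∈ C} := fun p hp =>
  show ‖f p‖ ∈ C from (hf p).symm ▸ hφ hp

theorem mapsTo_image_norm {E : Type*} [Norm E] {f : E → E} {φ : ℝ → ℝ} {X : Set E}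
    (hf : ∀ p, ‖f p‖ = φ ‖p‖) (hX : MapsTo f X X) : MapsTo φ (norm '' X) (norm '' X) := by
  rintro _ ⟨q, hq, rfl⟩
  exact ⟨f q, hX hq, hf q⟩

theorem setOf_norm_mem_subset {E : Type*} [SeminormedAddCommGroup E] {X : Set E} {C : Set ℝ}
    (hC : C ⊆ norm '' X) (hX : ∀ q ∈ X, sphere 0 ‖q‖ ⊆ X) : {p | ‖p‖ ∈ C} ⊆ X := by
  intro p hp
  obtain ⟨q, hq, hqp⟩ := hC hp
  exact hX q hq (mem_sphere_zero_iff_norm.2 hqp.symm)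

theorem sqrt_sq_add_sq_eq_norm (p : EuclideanSpace ℝ (Fin 2)) : √(p 0 ^ 2 + p 1 ^ 2) = ‖p‖ := by
  simp [EuclideanSpace.norm_eq, Fin.sum_univ_two]

theorem norm_eq_abs_of_ofLp_eq {q : EuclideanSpace ℝ (Fin 2)} {x : ℝ} (h : q.ofLp = ![x, 0]) :
    ‖q‖ = |x| := by
  simp [EuclideanSpace.norm_eq, Fin.sum_univ_two, h, Real.sqrt_sq_eq_abs]

-- `e z = (re z, im z)`: the isometric identification of `ℂ` with `ℝ²`.
local notation "e" => Complex.orthonormalBasisOneI.repr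

theorem planeRotation_repr (θ : ℝ) (z : ℂ) : planeRotation θ (e z) = e (Circle.exp θ * z) := by
  ext i
  fin_cases i <;> simp [planeRotation, Circle.coe_exp, exp_mul_I, ← ofReal_cos, ← ofReal_sin] <;>
    ring

theorem planeRotation_iterate_repr (θ : ℝ) (n : ℕ) (z : ℂ) :
    (planeRotation θ)^[n] (e z) = e ((Circle.exp θ ^ n : Circle) * z) := by
  induction n with
  | zero => simp
  | succ n ih =>
    rw [Function.iterate_succ_apply', ih, planeRotation_repr, pow_succ', Circle.coe_mul, mul_assoc]

theorem norm_planeRotation (θ : ℝ) (p : EuclideanSpace ℝ (Fin 2)) :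
    ‖planeRotation θ p‖ = ‖p‖ := by
  obtain ⟨z, rfl⟩ := (e).surjective p
  simp [planeRotation_repr]

theorem planeRotation_surjective (θ : ℝ) : Function.Surjective (planeRotation θ) := by
  intro p
  obtain ⟨z, rfl⟩ := (e).surjective p
  refine ⟨e (Circle.exp (-θ) * z), ?_⟩
  rw [planeRotation_repr, ← mul_assoc, ← Circle.coe_mul, ← Circle.exp_add, add_neg_cancel,
    Circle.exp_zero, Circle.coe_one, one_mul]

theorem denseRange_circleExp_pow {α : ℝ} (hα : Irrational α) :
    DenseRange fun n : ℕ => Circle.exp (2 * π * α) ^ n := by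
  have : Fact (0 < 2 * π) := ⟨by positivity⟩
  have hdense : DenseRange fun n : ℕ => n • (↑(2 * π * α) : AddCircle (2 * π)) := by
    refine denseRange_zsmul_iff_nsmul.1 (AddCircle.denseRange_zsmul_coe_iff.2 ?_)
    rwa [mul_div_cancel_left₀ α (by positivity : (2 * π) ≠ 0)]
  convert AddCircle.homeomorphCircle'.surjective.denseRange.comp hdense
    AddCircle.homeomorphCircle'.continuous using 2 with n
  rw [Function.comp_apply, ← AddCircle.coe_nsmul, AddCircle.homeomorphCircle'_apply_mk,
    Circle.exp_nsmul]

theorem circleExp_arg_sub_arg_mul {z w : ℂ} (h : ‖w‖ = ‖z‖) :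
    (Circle.exp (arg w - arg z) : ℂ) * z = w :=
  calc (Circle.exp (arg w - arg z) : ℂ) * z
      = exp (↑(arg w - arg z) * I) * (‖z‖ * exp (arg z * I)) := by
        rw [Circle.coe_exp, norm_mul_exp_arg_mul_I]
    _ = ‖w‖ * exp (arg w * I) := by
        rw [h, mul_left_comm, ← Complex.exp_add]
        push_cast
        ring_nf
    _ = w := norm_mul_exp_arg_mul_I w

theorem sphere_subset_closure_planeRotation_orbit {α : ℝ} (hα : Irrational α)
    (p : EuclideanSpace ℝ (Fin 2)) :
    sphere 0 ‖p‖ ⊆ closure (range fun n : ℕ => (planeRotation (2 * π * α))^[n] p) := by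
  obtain ⟨z, rfl⟩ := (e).surjective p
  intro q hq
  obtain ⟨w, rfl⟩ := (e).surjective q
  have hw : ‖w‖ = ‖z‖ := by simpa using hq
  have hΦ : Continuous fun v : Circle => e (v * z) := by fun_prop
  have hwΦ : e w ∈ range fun v : Circle => e (v * z) :=
    ⟨_, congrArg e (circleExp_arg_sub_arg_mul hw)⟩
  have horbit : (fun n : ℕ => (planeRotation (2 * π * α))^[n] (e z)) =
      (fun v : Circle => e (v * z)) ∘ fun n => Circle.exp (2 * π * α) ^ n :=
    funext fun n => planeRotation_iterate_repr _ n z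
  rw [horbit, range_comp]
  exact hΦ.range_subset_closure_image_dense (denseRange_circleExp_pow hα) hwΦ

theorem sphere_subset_of_mapsTo_planeRotation {α : ℝ} (hα : Irrational α)
    {X : Set (EuclideanSpace ℝ (Fin 2))} (hX : IsClosed X)
    (hgX : MapsTo (planeRotation (2 * π * α)) X X) {p : EuclideanSpace ℝ (Fin 2)} (hp : p ∈ X) :
    sphere 0 ‖p‖ ⊆ X :=
  (sphere_subset_closure_planeRotation_orbit hα p).trans
    (closure_minimal (range_subset_iff.2 fun n => hgX.iterate n hp) hX)

/-- Proposition (part 2): the Cantor target `X₀ = {p ∈ ℝ² : ‖p‖ ∈ C}` is the minimal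
invariant set of the R-IFS `{g, f₁, f₂}`, where `g` is the rotation by `2πα` (`α` irrational),
`f₁(x,y) = (√(x²+y²)/3, 0)` and `f₂(x,y) = (√(x²+y²)/3 + 2/3, 0)`. -/
theorem cantor_target_is_minimal_invariant_of_RIFS
    (α : ℝ) (hα : Irrational α)
    (g f₁ f₂ : EuclideanSpace ℝ (Fin 2) → EuclideanSpace ℝ (Fin 2))
    (hg : g = planeRotation (2 * Real.pi * α))
    (hf₁ : ∀ p, f₁ p = ![Real.sqrt ((p 0) ^ 2 + (p 1) ^ 2) / 3, 0])
    (hf₂ : ∀ p, f₂ p = ![Real.sqrt ((p 0) ^ 2 + (p 1) ^ 2) / 3 + 2 / 3, 0])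
    (C : Set ℝ) (hCne : C.Nonempty) (hCc : IsCompact C)
    (hC : C = (fun x : ℝ => x / 3) '' C ∪ (fun x : ℝ => x / 3 + 2 / 3) '' C)
    (X₀ : Set (EuclideanSpace ℝ (Fin 2)))
    (hX₀ : X₀ = {p : EuclideanSpace ℝ (Fin 2) | ‖p‖ ∈ C}) :
    X₀.Nonempty ∧ IsCompact X₀ ∧
    X₀ = (g '' X₀) ∪ (f₁ '' X₀) ∪ (f₂ '' X₀) ∧
    ∀ X : Set (EuclideanSpace ℝ (Fin 2)), X.Nonempty → IsClosed X →
      Bornology.IsBounded X → X = (g '' X) ∪ (f₁ '' X) ∪ (f₂ '' X) → X₀ ⊆ X := by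
  subst hg hX₀
  have hnf₁ : ∀ p, ‖f₁ p‖ = ‖p‖ / 3 := fun p => by
    rw [norm_eq_abs_of_ofLp_eq (hf₁ p), sqrt_sq_add_sq_eq_norm, abs_of_nonneg (by positivity)]
  have hnf₂ : ∀ p, ‖f₂ p‖ = ‖p‖ / 3 + 2 / 3 := fun p => by
    rw [norm_eq_abs_of_ofLp_eq (hf₂ p), sqrt_sq_add_sq_eq_norm, abs_of_nonneg (by positivity)]
  have hCI : C ⊆ Icc 0 1 := cantor_subset_Icc hCc.isBounded hC.subset
  refine ⟨?_, ?_, ?_, ?_⟩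
  · obtain ⟨c, hc⟩ := hCne
    obtain ⟨p, hp⟩ := exists_norm_eq (EuclideanSpace ℝ (Fin 2)) (hCI hc).1
    exact ⟨p, show ‖p‖ ∈ C from hp ▸ hc⟩
  · exact (isCompact_closedBall 0 1).of_isClosed_subset
      (hCc.isClosed.preimage continuous_norm) fun p hp => mem_closedBall_zero_iff.2 (hCI hp).2
  · have hg := image_setOf_norm_mem (planeRotation_surjective (2 * π * α)) (norm_planeRotation _) C
    have hC₁ : MapsTo (· / 3) C C := fun x hx => hC.superset (.inl (mem_image_of_mem _ hx))
    have hC₂ : MapsTo (· / 3 + 2 / 3) C C := fun x hx => hC.superset (.inr (mem_image_of_mem _ hx))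
    exact Subset.antisymm (hg.superset.trans (subset_union_left.trans subset_union_left))
      (union_subset (union_subset hg.subset (mapsTo_setOf_norm_mem hnf₁ hC₁).image_subset)
        (mapsTo_setOf_norm_mem hnf₂ hC₂).image_subset)
  · intro X hXne hXcl hXbd hX
    obtain ⟨⟨hgX, hf₁X⟩, hf₂X⟩ : (MapsTo _ X X ∧ MapsTo f₁ X X) ∧ MapsTo f₂ X X := by
      simpa only [union_subset_iff, ← mapsTo_iff_image_subset] using hX.superset
    have hCX : C ⊆ norm '' X :=
      cantor_subset_of_mapsTo hCc.isBounded hC.subset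
        ((isCompact_of_isClosed_isBounded hXcl hXbd).image continuous_norm).isClosed
        (hXne.image _) (mapsTo_image_norm hnf₁ hf₁X) (mapsTo_image_norm hnf₂ hf₂X)
    exact setOf_norm_mem_subset hCX fun q hq => sphere_subset_of_mapsTo_planeRotation hα hXcl hgX hq
end

section
/- (Example: the circle as a minimal invariant set) Let α ∈ ℝ be irrational, let g : ℝ² → ℝ² be the rotation about the origin by angle 2πα, and define f(x, y) = (√(x² + y²)/3 + 2/3, 0). Then the unit circle S = {p ∈ ℝ² : ‖p‖ = 1} satisfies S = g(S) ∪ f(S), and S ⊆ X for every nonempty closed bounded X ⊆ ℝ² with X = g(X) ∪ f(X); i.e. the unit circle is the minimal invariant set of the R-IFS {g, f}. -/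
open Real Set Function Filter Topology
open scoped NNReal

theorem ContractingWith.mem_of_isFixedPt_of_mapsTo {α : Type*} [MetricSpace α] {K : ℝ≥0}
    {f : α → α} (hf : ContractingWith K f) {x : α} (hx : IsFixedPt f x) {s : Set α}
    (hs : IsClosed s) (hne : s.Nonempty) (hmaps : MapsTo f s s) : x ∈ s := by
  obtain ⟨y, hy⟩ := hne
  have hlim : Tendsto (fun n => f^[n] y) atTop (𝓝 x) := by
    rw [tendsto_iff_dist_tendsto_zero]
    have hgeom : Tendsto (fun n => (K : ℝ) ^ n * dist y x) atTop (𝓝 0) := by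
      simpa using (tendsto_pow_atTop_nhds_zero_of_lt_one K.2 hf.1).mul_const (dist y x)
    refine squeeze_zero (fun _ => dist_nonneg) (fun n => ?_) hgeom
    calc dist (f^[n] y) x = dist (f^[n] y) (f^[n] x) := by rw [(hx.iterate n).eq]
      _ ≤ (K : ℝ) ^ n * dist y x := by
        simpa using (hf.toLipschitzWith.iterate n).dist_le_mul y x
  exact hs.mem_of_tendsto hlim (Eventually.of_forall fun n => hmaps.iterate n hy)

theorem dense_preimage_range_nsmul_coe {a p : ℝ} [Fact (0 < p)] (h : Irrational (a / p)) :
    Dense ((↑) ⁻¹' range (fun n : ℕ => n • (a : AddCircle p)) : Set ℝ) :=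
  QuotientAddGroup.dense_preimage_mk.2
    (denseRange_zsmul_iff_nsmul.1 (AddCircle.denseRange_zsmul_coe_iff.2 h))

section RadialContraction
variable {E : Type*} [NormedAddCommGroup E] [NormedSpace ℝ E]

noncomputable def radialContraction (v p : E) : E := (‖p‖ / 3 + 2 / 3) • v

variable {v : E}

theorem contractingWith_radialContraction (hv : ‖v‖ = 1) :
    ContractingWith 3⁻¹ (radialContraction v) := by
  refine ⟨by norm_num, LipschitzWith.of_dist_le_mul fun p q => ?_⟩
  calc dist (radialContraction v p) (radialContraction v q)
      = |3⁻¹ * (‖p‖ - ‖q‖)| := by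
        rw [radialContraction, radialContraction, dist_eq_norm, ← sub_smul, norm_smul, hv,
          mul_one, Real.norm_eq_abs]
        ring_nf
    _ ≤ 3⁻¹ * dist p q := by
        rw [abs_mul, abs_of_pos (by norm_num), dist_eq_norm]
        gcongr
        exact abs_norm_sub_norm_le p q
    _ = ((3⁻¹ : ℝ≥0) : ℝ) * dist p q := by norm_num

theorem radialContraction_of_norm_eq_one {p : E} (hp : ‖p‖ = 1) : radialContraction v p = v := by
  rw [radialContraction, hp]; norm_num

end RadialContraction

noncomputable def unitVec (t : ℝ) : EuclideanSpace ℝ (Fin 2) := !₂[cos t, sin t]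

theorem continuous_unitVec : Continuous unitVec := by
  unfold unitVec; fun_prop

theorem norm_unitVec (t : ℝ) : ‖unitVec t‖ = 1 := by
  simp [unitVec, EuclideanSpace.norm_eq]

theorem unitVec_add_zsmul_two_pi (t : ℝ) (m : ℤ) : unitVec (t + m • (2 * π)) = unitVec t := by
  simp only [unitVec, zsmul_eq_mul, cos_add_int_mul_two_pi, sin_add_int_mul_two_pi]

theorem planeRotation_unitVec (θ t : ℝ) : planeRotation θ (unitVec t) = unitVec (t + θ) := by
  ext i
  fin_cases i
  · simp [planeRotation, unitVec, cos_add]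
  · simp [planeRotation, unitVec, sin_add]; ring

theorem iterate_planeRotation_unitVec (θ t : ℝ) (n : ℕ) :
    (planeRotation θ)^[n] (unitVec t) = unitVec (t + n * θ) := by
  induction n with
  | zero => simp
  | succ n ih => rw [iterate_succ_apply', ih, planeRotation_unitVec]; push_cast; ring_nf

theorem range_unitVec : range unitVec = Metric.sphere 0 1 := by
  refine (range_subset_iff.2 fun t => by simpa using norm_unitVec t).antisymm fun p hp => ?_
  set z : ℂ := ⟨p 0, p 1⟩
  have hz : ‖z‖ = 1 := by
    simpa [z, EuclideanSpace.norm_eq, Complex.norm_eq_sqrt_sq_add_sq] using hp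
  refine ⟨z.arg, ?_⟩
  ext i
  fin_cases i
  · simp [unitVec, Complex.cos_arg (norm_ne_zero_iff.1 (hz ▸ one_ne_zero)), hz, z]
  · simp [unitVec, Complex.sin_arg, hz, z]

theorem planeRotation_image_sphere (θ : ℝ) :
    planeRotation θ '' Metric.sphere 0 1 = Metric.sphere 0 1 := by
  rw [← range_unitVec, ← range_comp]
  simp only [comp_def, planeRotation_unitVec]
  exact (Equiv.addRight θ).surjective.range_comp unitVec

theorem sphere_subset_closure_range_iterate_planeRotation {θ : ℝ} (hθ : Irrational (θ / (2 * π))) :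
    Metric.sphere 0 1 ⊆ closure (range fun n : ℕ => (planeRotation θ)^[n] (unitVec 0)) := by
  have : Fact (0 < 2 * π) := ⟨two_pi_pos⟩
  rw [← range_unitVec]
  refine (continuous_unitVec.range_subset_closure_image_dense
    (dense_preimage_range_nsmul_coe hθ)).trans (closure_mono ?_)
  rintro _ ⟨t, ⟨n, hn⟩, rfl⟩
  -- `t ≡ nθ (mod 2π)`, so `unitVec t` is the `n`-th point of the orbit
  obtain ⟨m, hm⟩ := (AddCircle.coe_eq_zero_iff (2 * π)).1
    (show ((t - n * θ : ℝ) : AddCircle (2 * π)) = 0 by simp [← hn])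
  refine ⟨n, ?_⟩
  dsimp only
  rw [iterate_planeRotation_unitVec, ← unitVec_add_zsmul_two_pi _ m, hm]
  ring_nf

/-- Example: the unit circle is the minimal invariant set of the R-IFS `{g, f}`, where `g` is
the rotation by `2πα` (`α` irrational) and `f(x,y) = (√(x²+y²)/3 + 2/3, 0)`. -/
theorem unit_circle_is_minimal_invariant
    (α : ℝ) (hα : Irrational α)
    (g f : EuclideanSpace ℝ (Fin 2) → EuclideanSpace ℝ (Fin 2))
    (hg : g = planeRotation (2 * Real.pi * α))
    (hf : ∀ p, f p = ![Real.sqrt ((p 0) ^ 2 + (p 1) ^ 2) / 3 + 2 / 3, 0])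
    (S : Set (EuclideanSpace ℝ (Fin 2)))
    (hS : S = {p : EuclideanSpace ℝ (Fin 2) | ‖p‖ = 1}) :
    S = (g '' S) ∪ (f '' S) ∧
    ∀ X : Set (EuclideanSpace ℝ (Fin 2)), X.Nonempty → IsClosed X →
      Bornology.IsBounded X → X = (g '' X) ∪ (f '' X) → S ⊆ X := by
  have hS : S = Metric.sphere 0 1 := by rw [hS]; ext; simp
  have hf : f = radialContraction (unitVec 0) := by
    funext p
    ext i
    fin_cases i <;> simp [hf, radialContraction, unitVec, EuclideanSpace.norm_eq]
  have he := norm_unitVec 0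
  subst hg hf hS
  refine ⟨?_, fun X hne hclosed _ hX => ?_⟩
  · rw [planeRotation_image_sphere, eq_comm, union_eq_left]
    rintro _ ⟨p, hp, rfl⟩
    rw [radialContraction_of_norm_eq_one (mem_sphere_zero_iff_norm.1 hp)]
    exact mem_sphere_zero_iff_norm.2 he
  · have hgX : MapsTo (planeRotation (2 * π * α)) X X :=
      mapsTo_iff_image_subset.2 (subset_union_left.trans hX.superset)
    have hfX : MapsTo (radialContraction (unitVec 0)) X X :=
      mapsTo_iff_image_subset.2 (subset_union_right.trans hX.superset)
    have h0 : unitVec 0 ∈ X := (contractingWith_radialContraction he).mem_of_isFixedPt_of_mapsTo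
      (radialContraction_of_norm_eq_one he) hclosed hne hfX
    refine (sphere_subset_closure_range_iterate_planeRotation ?_).trans
      (closure_minimal (range_subset_iff.2 fun n => hgX.iterate n h0) hclosed)
    rwa [mul_div_cancel_left₀ _ two_pi_pos.ne']
end
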